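/- For every q with 0 < q < 1 and every x ∈ [0,1]: R_{∞,q}(t³,x) = x·v(q,x) + (1−q)²·x(1 − v(q,x)) − q²·x(1 − v(q,x)) v(q²,x), where t³ denotes the function t ↦ t³ on [0,1]. -/

import Mathlib

open Finset Filter

noncomputable section

/-- The q-integer `[n]_q = 1 + q + ⋯ + q^(n-1)`. -/
def qInt (q : ℝ) (n : ℕ) : ℝ := ∑ i ∈ Finset.range n, q ^ i

/-- The q-factorial `[n]_q!`. -/
def qFact (q : ℝ) : ℕ → ℝ
  | 0 => 1
  | n + 1 => qFact q n * qInt q (n + 1)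

/-- The q-binomial coefficient `[n k]_q`. -/
def qBinom (q : ℝ) (n k : ℕ) : ℝ := qFact q n / (qFact q k * qFact q (n - k))

/-- The Lupaş basis function `b_{nk}(q;x)`. -/
def lupasB (q : ℝ) (n k : ℕ) (x : ℝ) : ℝ :=
  qBinom q n k * q ^ (k * (k - 1) / 2) * x ^ k * (1 - x) ^ (n - k) /
    ∏ j ∈ Finset.range (n - 1), (1 - x + q ^ (j + 1) * x)

/-- The limit Lupaş basis function `b_{∞k}(q;x)` (for `0 < q < 1`, `x ∈ [0,1)`). -/
def lupasBInf (q : ℝ) (k : ℕ) (x : ℝ) : ℝ :=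
  q ^ (k * (k - 1) / 2) * (x / (1 - x)) ^ k /
    ((1 - q) ^ k * qFact q k * ∏' j : ℕ, (1 + q ^ j * (x / (1 - x))))

/-- The Lupaş q-analogue of the Bernstein operator `R_{n,q}(f,x)`. -/
def lupasR (q : ℝ) (n : ℕ) (f : ℝ → ℝ) (x : ℝ) : ℝ :=
  ∑ k ∈ Finset.range (n + 1), f (qInt q k / qInt q n) * lupasB q n k x

/-- The limit q-Lupaş operator `R_{∞,q}(f,x)` for `0 < q < 1`. -/
def lupasRInfLow (q : ℝ) (f : ℝ → ℝ) (x : ℝ) : ℝ :=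
  if x = 1 then f 1 else ∑' k : ℕ, f (1 - q ^ k) * lupasBInf q k x

/-- The limit q-Lupaş operator `R_{∞,q}(f,x)`: for `q > 1` it is defined by
reflection, `R_{∞,q}(f,x) = R_{∞,1/q}(g,1-x)` with `g(x) = f(1-x)`. -/
def lupasRInf (q : ℝ) (f : ℝ → ℝ) (x : ℝ) : ℝ :=
  if 1 < q then lupasRInfLow (1 / q) (fun t => f (1 - t)) (1 - x)
  else lupasRInfLow q f x

/-- The transform `v(q,x) = qx/(1-x+qx)`. -/
def vq (q x : ℝ) : ℝ := q * x / (1 - x + q * x)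

/-- `L_{n,q}(f,x) = R_{n,q}(f,x) - R_{∞,q}(f,x)`. -/
def lupasL (q : ℝ) (n : ℕ) (f : ℝ → ℝ) (x : ℝ) : ℝ :=
  lupasR q n f x - lupasRInf q f x

/-- The modulus of continuity `ω(f,t)` of `f` on `[0,1]`. -/
def omega1 (f : ℝ → ℝ) (t : ℝ) : ℝ :=
  sSup {d | ∃ x ∈ Set.Icc (0:ℝ) 1, ∃ y ∈ Set.Icc (0:ℝ) 1, |x - y| ≤ t ∧ d = |f x - f y|}

/-- The second modulus of smoothness `ω₂(f,t)` of `f` on `[0,1]`. -/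
def omega2 (f : ℝ → ℝ) (t : ℝ) : ℝ :=
  sSup {d | ∃ h, 0 ≤ h ∧ h ≤ t ∧ ∃ x, 0 ≤ x ∧ x ≤ 1 - 2 * h ∧
    d = |f (x + 2 * h) - 2 * f (x + h) + f x|}

/-!
For `x < 1` put `t = x / (1 - x)`. Euler's `q`-exponential
`E_q(t) = ∑ₖ q^(k(k-1)/2) tᵏ / ((1-q)ᵏ [k]_q!)` satisfies `E_q(t) = (1 + t) E_q(qt)`; iterating
this and using `E_q(qⁿ t) → 1` gives Euler's identity `∏ⱼ (1 + qʲ t) = E_q(t)`, so `b_{∞k}(q;x)`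
is the `k`-th term of `E_q(t)` divided by `E_q(t)`. As the `k`-th term of `E_q(qᵐ t)` is `q^(mk)`
times that of `E_q(t)`, `∑ₖ q^(mk) b_{∞k}(q;x) = E_q(qᵐ t) / E_q(t) = 1 / ∏_{j<m} (1 + qʲ t)`.
Expanding `(1 - q^k)³` in powers of `q^k` reduces the third moment to the cases `m ≤ 3`.
-/

open Topology

lemma one_sub_mul_qInt (q : ℝ) (n : ℕ) : (1 - q) * qInt q n = 1 - q ^ n :=
  mul_neg_geom_sum q n

lemma qFact_pos {q : ℝ} (hq : 0 < q) (n : ℕ) : 0 < qFact q n := by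
  induction n with
  | zero => exact one_pos
  | succ n ih =>
    have : 0 < qInt q (n + 1) := sum_pos (fun i _ => pow_pos hq i) nonempty_range_add_one
    exact mul_pos ih this

-- The exponent `k(k-1)/2` is written as `∑ i < k, i` to avoid truncated division in `ℕ`.
def eulerTerm (q t : ℝ) (k : ℕ) : ℝ :=
  q ^ (∑ i ∈ range k, i) * t ^ k / ((1 - q) ^ k * qFact q k)

def eulerExp (q t : ℝ) : ℝ := ∑' k, eulerTerm q t k

section EulerExp

variable {q : ℝ}

@[simp] lemma eulerTerm_zero (q t : ℝ) : eulerTerm q t 0 = 1 := by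
  simp [eulerTerm, qFact]

lemma eulerTerm_mul_left (q c t : ℝ) (k : ℕ) :
    eulerTerm q (c * t) k = c ^ k * eulerTerm q t k := by
  rw [eulerTerm, eulerTerm, mul_pow]; ring

lemma eulerTerm_nonneg (hq0 : 0 < q) (hq1 : q < 1) {t : ℝ} (ht : 0 ≤ t) (k : ℕ) :
    0 ≤ eulerTerm q t k := by
  have hfact := qFact_pos hq0 k
  have hq : 0 < 1 - q := sub_pos.2 hq1
  unfold eulerTerm; positivity

lemma eulerTerm_succ (hq0 : 0 < q) (hq1 : q < 1) (t : ℝ) (k : ℕ) :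
    eulerTerm q t (k + 1) = q ^ k * t / (1 - q ^ (k + 1)) * eulerTerm q t k := by
  have hq : 1 - q ≠ 0 := sub_ne_zero.2 hq1.ne'
  have hk : 1 - q ^ (k + 1) ≠ 0 :=
    sub_ne_zero.2 (pow_lt_one₀ hq0.le hq1 k.succ_ne_zero).ne'
  have hfact := (qFact_pos hq0 k).ne'
  have hdenom : (1 - q) ^ (k + 1) * qFact q (k + 1)
      = (1 - q) ^ k * qFact q k * (1 - q ^ (k + 1)) := by
    rw [← one_sub_mul_qInt, qFact]; ring
  rw [eulerTerm, eulerTerm, hdenom, sum_range_succ, pow_add, pow_succ t]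
  field_simp

lemma summable_eulerTerm (hq0 : 0 < q) (hq1 : q < 1) (t : ℝ) : Summable (eulerTerm q t) := by
  have hsmall : ∀ᶠ k : ℕ in atTop, q ^ k * |t| ≤ (1 - q) / 2 := by
    have : Tendsto (fun k : ℕ => q ^ k * |t|) atTop (𝓝 0) := by
      simpa using (tendsto_pow_atTop_nhds_zero_of_lt_one hq0.le hq1).mul_const |t|
    exact (this.eventually_lt_const (by linarith)).mono fun _ h => h.le
  refine summable_of_ratio_norm_eventually_le (r := 1 / 2) (by norm_num) ?_
  filter_upwards [hsmall] with k hk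
  have hgap : 1 - q ≤ 1 - q ^ (k + 1) :=
    sub_le_sub_left (pow_le_of_le_one hq0.le hq1.le k.succ_ne_zero) 1
  have hratio : |q ^ k * t / (1 - q ^ (k + 1))| ≤ 1 / 2 := by
    rw [abs_div, abs_mul, abs_of_pos (pow_pos hq0 k),
      abs_of_pos (show 0 < 1 - q ^ (k + 1) by linarith), div_le_iff₀ (by linarith)]
    linarith
  rw [eulerTerm_succ hq0 hq1, norm_mul]
  exact mul_le_mul_of_nonneg_right hratio (norm_nonneg _)

lemma eulerExp_eq_one_add_mul (hq0 : 0 < q) (hq1 : q < 1) (t : ℝ) :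
    eulerExp q t = (1 + t) * eulerExp q (q * t) := by
  have hs := summable_eulerTerm hq0 hq1 (q * t)
  have hterm (k : ℕ) : eulerTerm q t (k + 1)
      = eulerTerm q (q * t) (k + 1) + t * eulerTerm q (q * t) k := by
    rw [eulerTerm_mul_left, eulerTerm_mul_left, eulerTerm_succ hq0 hq1]
    have := (sub_pos.2 (pow_lt_one₀ hq0.le hq1 k.succ_ne_zero)).ne'
    field_simp
    ring
  have hshift : ∑' k, eulerTerm q t (k + 1)
      = ∑' k, eulerTerm q (q * t) (k + 1) + t * eulerExp q (q * t) := by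
    rw [tsum_congr hterm, ((summable_nat_add_iff 1).2 hs).tsum_add (hs.mul_left t),
      tsum_mul_left, eulerExp]
  rw [eulerExp, (summable_eulerTerm hq0 hq1 t).tsum_eq_zero_add, hshift, eulerExp,
    hs.tsum_eq_zero_add, eulerTerm_zero, eulerTerm_zero]
  ring

lemma eulerExp_eq_prod_mul (hq0 : 0 < q) (hq1 : q < 1) (t : ℝ) (n : ℕ) :
    eulerExp q t = (∏ j ∈ range n, (1 + q ^ j * t)) * eulerExp q (q ^ n * t) := by
  induction n with
  | zero => simp
  | succ n ih =>
    rw [ih, eulerExp_eq_one_add_mul hq0 hq1 (q ^ n * t), prod_range_succ,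
      show q * (q ^ n * t) = q ^ (n + 1) * t by ring, mul_assoc]

lemma one_le_eulerExp (hq0 : 0 < q) (hq1 : q < 1) {t : ℝ} (ht : 0 ≤ t) : 1 ≤ eulerExp q t := by
  simpa [eulerExp] using (summable_eulerTerm hq0 hq1 t).le_tsum 0
    fun k _ => eulerTerm_nonneg hq0 hq1 ht k

lemma tendsto_eulerExp_pow_mul (hq0 : 0 < q) (hq1 : q < 1) (t : ℝ) :
    Tendsto (fun n : ℕ => eulerExp q (q ^ n * t)) atTop (𝓝 1) := by
  have hlim : ∑' k, (0 : ℝ) ^ k * eulerTerm q t k = 1 := by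
    rw [tsum_eq_single 0 fun k hk => by simp [zero_pow hk]]
    simp
  rw [← hlim]
  simp only [eulerExp, eulerTerm_mul_left]
  refine tendsto_tsum_of_dominated_convergence (summable_eulerTerm hq0 hq1 t).abs
    (fun k => ((tendsto_pow_atTop_nhds_zero_of_lt_one hq0.le hq1).pow k).mul_const _)
    (Eventually.of_forall fun n k => ?_)
  rw [norm_mul, Real.norm_eq_abs, Real.norm_eq_abs, abs_of_nonneg (by positivity)]
  exact mul_le_of_le_one_left (abs_nonneg _) (pow_le_one₀ (by positivity)
    (pow_le_one₀ hq0.le hq1.le))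

lemma hasProd_eulerExp (hq0 : 0 < q) (hq1 : q < 1) (t : ℝ) :
    HasProd (fun j : ℕ => 1 + q ^ j * t) (eulerExp q t) := by
  have hmult : Multipliable fun j : ℕ => 1 + q ^ j * t :=
    Real.multipliable_one_add_of_summable ((summable_geometric_of_lt_one hq0.le hq1).mul_right t)
  rw [hmult.hasProd_iff_tendsto_nat]
  have hlim := tendsto_eulerExp_pow_mul hq0 hq1 t
  have hquot : Tendsto (fun n : ℕ => eulerExp q t / eulerExp q (q ^ n * t)) atTop
      (𝓝 (eulerExp q t)) := by
    simpa [div_eq_mul_inv] using (hlim.inv₀ one_ne_zero).const_mul (eulerExp q t)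
  refine hquot.congr' ?_
  filter_upwards [hlim.eventually_ne one_ne_zero] with n hn
  rw [eq_comm, eq_div_iff hn, ← eulerExp_eq_prod_mul hq0 hq1]

end EulerExp

section LupasBInf

variable {q : ℝ}

lemma lupasBInf_eq_eulerTerm_div (hq0 : 0 < q) (hq1 : q < 1) (k : ℕ) (x : ℝ) :
    lupasBInf q k x = eulerTerm q (x / (1 - x)) k / eulerExp q (x / (1 - x)) := by
  rw [lupasBInf, (hasProd_eulerExp hq0 hq1 _).tprod_eq, eulerTerm, sum_range_id, div_div]

lemma hasSum_pow_mul_lupasBInf (hq0 : 0 < q) (hq1 : q < 1) {x : ℝ} (hx0 : 0 ≤ x) (hx1 : x < 1)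
    (m : ℕ) : HasSum (fun k => (q ^ k) ^ m * lupasBInf q k x)
      (∏ j ∈ range m, (1 + q ^ j * (x / (1 - x))))⁻¹ := by
  set t := x / (1 - x)
  have ht : 0 ≤ t := div_nonneg hx0 (sub_nonneg.2 hx1.le)
  have hE (s : ℝ) (hs : 0 ≤ s) : eulerExp q s ≠ 0 :=
    (one_pos.trans_le (one_le_eulerExp hq0 hq1 hs)).ne'
  have hvalue : (∏ j ∈ range m, (1 + q ^ j * t))⁻¹ = eulerExp q (q ^ m * t) / eulerExp q t := by
    rw [eulerExp_eq_prod_mul hq0 hq1 t m, div_mul_cancel_right₀ (hE _ (by positivity))]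
  rw [hvalue]
  refine ((summable_eulerTerm hq0 hq1 (q ^ m * t)).hasSum.div_const _).congr_fun fun k => ?_
  rw [lupasBInf_eq_eulerTerm_div hq0 hq1, eulerTerm_mul_left, ← pow_mul, mul_comm k m, pow_mul]
  ring

end LupasBInf

theorem lupasRInf_third_moment (q : ℝ) (hq0 : 0 < q) (hq1 : q < 1)
    (x : ℝ) (hx : x ∈ Set.Icc (0:ℝ) 1) :
    lupasRInf q (fun t => t ^ 3) x =
      x * vq q x + (1 - q) ^ 2 * (x * (1 - vq q x)) -
        q ^ 2 * (x * (1 - vq q x) * vq (q ^ 2) x) := by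
  rw [lupasRInf, if_neg hq1.not_gt, lupasRInfLow]
  rcases hx.2.eq_or_lt with rfl | hx1
  · simp only [if_pos, vq]
    field_simp
    ring
  have hmoment := hasSum_pow_mul_lupasBInf hq0 hq1 hx.1 hx1
  have hsum := (((hmoment 0).sub ((hmoment 1).mul_left 3)).add ((hmoment 2).mul_left 3)).sub
    (hmoment 3)
  rw [if_neg hx1.ne, (hsum.congr_fun fun k => by ring).tsum_eq]
  have h1x : 1 - x ≠ 0 := sub_ne_zero.2 hx1.ne'
  -- the denominators in the form to which `field_simp` normalises them
  have hv1 : 1 - x + x * q ≠ 0 := by nlinarith [hx.1]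
  have hv2 : 1 - x + x * q ^ 2 ≠ 0 := by nlinarith [hx.1, sq_nonneg q]
  have hfactor (c : ℝ) : 1 + c * (x / (1 - x)) = (1 - x + c * x) / (1 - x) := by
    field_simp
  simp only [prod_range_succ, prod_range_zero, pow_zero, pow_one, one_mul, hfactor, vq]
  field_simp
  ring
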